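/- Let n ≥ 1 be an integer, P ≥ 1, C > 0, ε > 0 real numbers, and L = εC/(n(P+1)). Let N = {1, …, n} be a set of users, where user k has demand d_k ∈ ℂ with Im(d_k) ≥ 0 and −Re(d_k) ≤ P·Im(d_k) whenever Re(d_k) < 0, and utility u_k ≥ 0. Let OPT = max{ ∑_{k∈S} u_k : S ⊆ N, |∑_{k∈S} d_k| ≤ C }. Suppose Ŝ ⊆ N maximizes ∑_{k∈S} u_k over all S ⊆ N satisfying |∑_{k∈S} ĥd_k| ≤ (1+2ε)·C, where ĥd_k are the rounded demands. Then ∑_{k∈Ŝ} u_k ≥ OPT and |∑_{k∈Ŝ} d_k| ≤ (1+3ε)·C; that is, Ŝ is a (1, 1+3ε)-approximation to the complex-demand knapsack problem. -/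

import Mathlib

/-- The rounded demand: real part rounded up (resp. down) to a multiple of `L`
when it is nonnegative (resp. negative), imaginary part always rounded up. -/
noncomputable def roundDemand (L : ℝ) (d : ℂ) : ℂ :=
  if 0 ≤ d.re then
    ⟨(⌈d.re / L⌉ : ℤ) * L, (⌈d.im / L⌉ : ℤ) * L⟩
  else
    ⟨(⌊d.re / L⌋ : ℤ) * L, (⌈d.im / L⌉ : ℤ) * L⟩

/-!
Rounding each coordinate to a multiple of `L` moves a demand by at most `L` per coordinate,
hence by at most `2L` in norm, so the rounded and exact total demands of any set of at most
`n` users differ by at most `2nL ≤ (P + 1)nL = εC`. Every set feasible for capacity `C` is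
therefore feasible for the rounded capacity `(1 + 2ε)C`, which gives utility at least `OPT`,
and the exact total demand of `Ŝ` exceeds its rounded one by at most `εC`.
-/

lemma abs_intCast_mul_sub_le {L x : ℝ} (hL : 0 < L) {m : ℤ} (hm : |(m : ℝ) - x / L| ≤ 1) :
    |m * L - x| ≤ L := by
  have hfactor : m * L - x = ((m : ℝ) - x / L) * L := by field_simp
  rw [hfactor, abs_mul, abs_of_pos hL]
  exact mul_le_of_le_one_left hL.le hm

lemma abs_ceil_div_mul_sub_le {L : ℝ} (hL : 0 < L) (x : ℝ) : |⌈x / L⌉ * L - x| ≤ L :=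
  abs_intCast_mul_sub_le hL <| abs_le.2
    ⟨by linarith [Int.le_ceil (x / L)], by linarith [Int.ceil_lt_add_one (x / L)]⟩

lemma abs_floor_div_mul_sub_le {L : ℝ} (hL : 0 < L) (x : ℝ) : |⌊x / L⌋ * L - x| ≤ L :=
  abs_intCast_mul_sub_le hL <| abs_le.2
    ⟨by linarith [Int.sub_one_lt_floor (x / L)], by linarith [Int.floor_le (x / L)]⟩

lemma norm_roundDemand_sub_le {L : ℝ} (hL : 0 < L) (d : ℂ) :
    ‖roundDemand L d - d‖ ≤ 2 * L := by
  have hre : |(roundDemand L d - d).re| ≤ L := by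
    rw [Complex.sub_re, roundDemand]
    split
    · exact abs_ceil_div_mul_sub_le hL d.re
    · exact abs_floor_div_mul_sub_le hL d.re
  have him : |(roundDemand L d - d).im| ≤ L := by
    rw [Complex.sub_im, roundDemand]
    split <;> exact abs_ceil_div_mul_sub_le hL d.im
  linarith [Complex.norm_le_abs_re_add_abs_im (roundDemand L d - d)]

lemma norm_sum_roundDemand_sub_sum_le {ι : Type*} {L : ℝ} (hL : 0 < L) (S : Finset ι)
    (d : ι → ℂ) : ‖∑ k ∈ S, roundDemand L (d k) - ∑ k ∈ S, d k‖ ≤ 2 * S.card * L := by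
  rw [← Finset.sum_sub_distrib]
  calc ‖∑ k ∈ S, (roundDemand L (d k) - d k)‖
      ≤ ∑ k ∈ S, ‖roundDemand L (d k) - d k‖ := norm_sum_le _ _
    _ ≤ ∑ _k ∈ S, 2 * L := Finset.sum_le_sum fun k _ => norm_roundDemand_sub_le hL (d k)
    _ = 2 * S.card * L := by rw [Finset.sum_const, nsmul_eq_mul]; ring

lemma norm_sum_roundDemand_sub_sum_le_eps_mul {n : ℕ} (hn : 1 ≤ n) {P C ε L : ℝ}
    (hP : 1 ≤ P) (hC : 0 < C) (hε : 0 < ε) (hL : L = ε * C / (n * (P + 1)))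
    (S : Finset (Fin n)) (d : Fin n → ℂ) :
    ‖∑ k ∈ S, roundDemand L (d k) - ∑ k ∈ S, d k‖ ≤ ε * C := by
  have hn₀ : (0 : ℝ) < n := by exact_mod_cast hn
  have hL₀ : 0 < L := by rw [hL]; positivity
  have hnPL : n * (P + 1) * L = ε * C := by rw [hL]; field_simp
  have hcard : (S.card : ℝ) ≤ n := by exact_mod_cast card_finset_fin_le S
  calc ‖∑ k ∈ S, roundDemand L (d k) - ∑ k ∈ S, d k‖
      ≤ 2 * S.card * L := norm_sum_roundDemand_sub_sum_le hL₀ S d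
    _ ≤ n * (P + 1) * L := mul_le_mul_of_nonneg_right (by nlinarith) hL₀.le
    _ = ε * C := hnPL

theorem stmt_9_general (n : ℕ) (hn : 1 ≤ n) (P C ε L : ℝ)
    (hP : 1 ≤ P) (hC : 0 < C) (hε : 0 < ε)
    (hL : L = ε * C / (n * (P + 1)))
    (d : Fin n → ℂ) (u : Fin n → ℝ)
    (Shat : Finset (Fin n))
    (hFeas : ‖∑ k ∈ Shat, roundDemand L (d k)‖ ≤ (1 + 2 * ε) * C)
    (hMax : ∀ S : Finset (Fin n),
      ‖∑ k ∈ S, roundDemand L (d k)‖ ≤ (1 + 2 * ε) * C →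
      ∑ k ∈ S, u k ≤ ∑ k ∈ Shat, u k) :
    (∀ S : Finset (Fin n), ‖∑ k ∈ S, d k‖ ≤ C →
        ∑ k ∈ S, u k ≤ ∑ k ∈ Shat, u k) ∧
    ‖∑ k ∈ Shat, d k‖ ≤ (1 + 3 * ε) * C := by
  have hround := norm_sum_roundDemand_sub_sum_le_eps_mul hn hP hC hε hL (d := d)
  constructor
  · intro S hS
    apply hMax
    calc ‖∑ k ∈ S, roundDemand L (d k)‖
        ≤ ‖∑ k ∈ S, d k‖ + ‖∑ k ∈ S, roundDemand L (d k) - ∑ k ∈ S, d k‖ :=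
          norm_le_norm_add_norm_sub' _ _
      _ ≤ C + ε * C := add_le_add hS (hround S)
      _ ≤ (1 + 2 * ε) * C := by nlinarith
  · calc ‖∑ k ∈ Shat, d k‖
        ≤ ‖∑ k ∈ Shat, roundDemand L (d k)‖
          + ‖∑ k ∈ Shat, roundDemand L (d k) - ∑ k ∈ Shat, d k‖ :=
          norm_le_norm_add_norm_sub _ _
      _ ≤ (1 + 2 * ε) * C + ε * C := add_le_add hFeas (hround Shat)
      _ = (1 + 3 * ε) * C := by ring

/-- a set `Ŝ` maximizing total utility subject to the rounded
capacity constraint `|∑ ĥd_k| ≤ (1+2ε)C` is a `(1, 1+3ε)`-approximation to the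
complex-demand knapsack problem: its utility is at least the optimum `OPT`
and its (exact) total demand has magnitude at most `(1+3ε)C`. -/
theorem stmt_9 (n : ℕ) (hn : 1 ≤ n) (P C ε L : ℝ)
    (hP : 1 ≤ P) (hC : 0 < C) (hε : 0 < ε)
    (hL : L = ε * C / (n * (P + 1)))
    (d : Fin n → ℂ) (u : Fin n → ℝ) (hu : ∀ k, 0 ≤ u k)
    (hIm : ∀ k, 0 ≤ (d k).im)
    (hArg : ∀ k, (d k).re < 0 → -(d k).re ≤ P * (d k).im)
    (Shat : Finset (Fin n))
    (hFeas : ‖∑ k ∈ Shat, roundDemand L (d k)‖ ≤ (1 + 2 * ε) * C)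
    (hMax : ∀ S : Finset (Fin n),
      ‖∑ k ∈ S, roundDemand L (d k)‖ ≤ (1 + 2 * ε) * C →
      ∑ k ∈ S, u k ≤ ∑ k ∈ Shat, u k) :
    (∀ S : Finset (Fin n), ‖∑ k ∈ S, d k‖ ≤ C →
        ∑ k ∈ S, u k ≤ ∑ k ∈ Shat, u k) ∧
    ‖∑ k ∈ Shat, d k‖ ≤ (1 + 3 * ε) * C :=
  stmt_9_general n hn P C ε L hP hC hε hL d u Shat hFeas hMax
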